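/- arXiv:1606.05722 — 5 statements merged into one kernel-verified Lean document; each statement's English description precedes it below -/
import Mathlib

section
/- Let r ≥ 1 and n ≥ r be positive integers and let (s₁, …, s_r) be an r-tuple of positive integers. Then the multiple harmonic star sum H*_n(s₁, …, s_r) is not an integer, with the single exception H*_1(s₁) = 1 (i.e., n = r = 1, where the sum equals 1 for every s₁). -/
/-- The multiple harmonic star sum
`H*_n(s₁, …, s_r) = ∑_{1 ≤ k₁ ≤ ⋯ ≤ k_r ≤ n} 1/(k₁^{s₁} ⋯ k_r^{s_r})`,
where `k i` ranges over `Fin n` so the actual summation index is `(k i : ℕ) + 1`. -/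
def mhsStar (n r : ℕ) (s : Fin r → ℕ) : ℚ :=
  ∑ k ∈ Finset.univ.filter (fun k : Fin r → Fin n => ∀ i j : Fin r, i ≤ j → k i ≤ k j),
    ∏ i, (1 : ℚ) / ((k i : ℕ) + 1 : ℚ) ^ s i

/-!
Every summand is a product of reciprocals of integers `k ≤ n`, and the 2-adic valuation of such
an integer is at most `a = log₂ n`, with equality only for `k = 2 ^ a`. Hence the constant tuple
`k₁ = ⋯ = k_r = 2 ^ a` is the unique summand of minimal 2-adic valuation `-a (s₁ + ⋯ + s_r)`, so
this is the valuation of `H*_n(s)`. It is negative as soon as `n ≥ 2`, and then `H*_n(s)` is not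
an integer.
-/

open Finset

section padicValRat

variable {ι : Type*} {p : ℕ} [Fact p.Prime]

theorem padicValRat_prod (S : Finset ι) {F : ι → ℚ} (hF : ∀ i ∈ S, F i ≠ 0) :
    padicValRat p (∏ i ∈ S, F i) = ∑ i ∈ S, padicValRat p (F i) := by
  induction S using Finset.cons_induction with
  | empty => simp
  | cons a S ha ih =>
    rw [prod_cons, sum_cons, padicValRat.mul (hF a (mem_cons_self a S))
      (prod_ne_zero_iff.2 fun i hi => hF i (mem_cons_of_mem hi)),
      ih fun i hi => hF i (mem_cons_of_mem hi)]

theorem lt_padicValRat_sum {c : ℤ} {S : Finset ι} {F : ι → ℚ} (hS : S.Nonempty)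
    (hpos : ∀ i ∈ S, 0 < F i) (hF : ∀ i ∈ S, c < padicValRat p (F i)) :
    c < padicValRat p (∑ i ∈ S, F i) := by
  induction hS using Finset.Nonempty.cons_induction with
  | singleton a => simpa using hF a (mem_singleton_self a)
  | cons a S ha hS ih =>
    have hpos' : ∀ i ∈ S, 0 < F i := fun i hi => hpos i (mem_cons_of_mem hi)
    rw [sum_cons]
    exact (lt_min (hF a (mem_cons_self a S)) (ih hpos' fun i hi => hF i (mem_cons_of_mem hi))).trans_le
      (padicValRat.min_le_padicValRat_add (add_pos (hpos a (mem_cons_self a S)) (sum_pos hpos' hS)).ne')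

theorem padicValRat_sum_eq_of_lt [DecidableEq ι] {S : Finset ι} {F : ι → ℚ} {j : ι} (hj : j ∈ S)
    (hpos : ∀ i ∈ S, 0 < F i)
    (hlt : ∀ i ∈ S, i ≠ j → padicValRat p (F j) < padicValRat p (F i)) :
    padicValRat p (∑ i ∈ S, F i) = padicValRat p (F j) := by
  rw [← add_sum_erase S F hj]
  rcases (S.erase j).eq_empty_or_nonempty with hS | hS
  · simp [hS]
  have hpos' : ∀ i ∈ S.erase j, 0 < F i := fun i hi => hpos i (mem_of_mem_erase hi)
  exact padicValRat.add_eq_of_lt (add_pos (hpos j hj) (sum_pos hpos' hS)).ne' (hpos j hj).ne'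
    (sum_pos hpos' hS).ne'
    (lt_padicValRat_sum hS hpos' fun i hi => hlt i (mem_of_mem_erase hi) (ne_of_mem_erase hi))

end padicValRat

theorem padicValNat_two_lt_log {m n : ℕ} (hm : m ≠ 0) (hmn : m ≤ n)
    (hne : m ≠ 2 ^ Nat.log 2 n) : padicValNat 2 m < Nat.log 2 n := by
  refine ((padicValNat_le_nat_log m).trans (Nat.log_mono_right hmn)).lt_of_ne fun h => hne ?_
  obtain ⟨c, rfl⟩ : 2 ^ Nat.log 2 n ∣ m := h ▸ pow_padicValNat_dvd
  have hc : c < 2 := by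
    have := Nat.lt_pow_succ_log_self one_lt_two n
    rw [pow_succ] at this
    exact Nat.lt_of_mul_lt_mul_left (hmn.trans_lt this)
  have : c ≠ 0 := by rintro rfl; simp at hm
  rw [show c = 1 by omega, mul_one]

theorem sum_mul_padicValNat_two_lt {ι : Type*} [Fintype ι] {m s : ι → ℕ} {n : ℕ}
    (hmn : ∀ i, m i ≤ n) {j : ι} (hm : m j ≠ 0) (hj : m j ≠ 2 ^ Nat.log 2 n)
    (hs : 0 < s j) : ∑ i, s i * padicValNat 2 (m i) < (∑ i, s i) * Nat.log 2 n := by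
  rw [sum_mul]
  refine sum_lt_sum (fun i _ => Nat.mul_le_mul_left _ ?_) ⟨j, mem_univ j, ?_⟩
  · exact (padicValNat_le_nat_log _).trans (Nat.log_mono_right (hmn i))
  · exact Nat.mul_lt_mul_of_pos_left (padicValNat_two_lt_log hm (hmn j) hj) hs

section mhsStar

variable {n r : ℕ} {s : Fin r → ℕ}

theorem padicValRat_two_mhsStar_summand (k : Fin r → Fin n) :
    padicValRat 2 (∏ i, (1 : ℚ) / ((k i : ℕ) + 1 : ℚ) ^ s i) =
      -((∑ i, s i * padicValNat 2 (k i + 1) : ℕ) : ℤ) := by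
  rw [padicValRat_prod _ fun i _ => by positivity]
  push_cast
  rw [← sum_neg_distrib]
  refine sum_congr rfl fun i _ => ?_
  rw [one_div, padicValRat.inv, padicValRat.pow]

theorem padicValRat_two_mhsStar (hn : 0 < n) (hs : ∀ i, 0 < s i) :
    padicValRat 2 (mhsStar n r s) = -(((∑ i, s i) * Nat.log 2 n : ℕ) : ℤ) := by
  have hpow : 1 ≤ 2 ^ Nat.log 2 n ∧ 2 ^ Nat.log 2 n ≤ n :=
    ⟨Nat.one_le_two_pow, Nat.pow_log_le_self 2 hn.ne'⟩
  set k₀ : Fin r → Fin n := fun _ => ⟨2 ^ Nat.log 2 n - 1, by omega⟩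
  have hk₀ : ∀ i, (k₀ i : ℕ) + 1 = 2 ^ Nat.log 2 n := fun i => Nat.sub_add_cancel hpow.1
  have hval₀ : ∑ i, s i * padicValNat 2 (k₀ i + 1) = (∑ i, s i) * Nat.log 2 n := by
    simp only [hk₀, padicValNat.prime_pow, sum_mul]
  unfold mhsStar
  rw [padicValRat_sum_eq_of_lt (j := k₀) (by simp [k₀]) (fun k _ => by positivity),
    padicValRat_two_mhsStar_summand, hval₀]
  intro k _ hk
  obtain ⟨j, hj⟩ := Function.ne_iff.1 hk
  rw [padicValRat_two_mhsStar_summand, padicValRat_two_mhsStar_summand, hval₀, neg_lt_neg_iff,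
    Nat.cast_lt]
  refine sum_mul_padicValNat_two_lt (fun i => (k i).isLt) (Nat.succ_ne_zero _) ?_ (hs j)
  intro h
  exact hj (Fin.ext (by have := hk₀ j; omega))

end mhsStar

theorem mhsStar_one_one (s : Fin 1 → ℕ) : mhsStar 1 1 s = 1 := by
  simp [mhsStar]

/-- The multiple harmonic star sum `H*_n(s₁,…,s_r)` with `n ≥ r ≥ 1` and positive
exponents is an integer if and only if `n = r = 1`, in which case it equals `1`. -/
theorem mhsStar_not_integer (n r : ℕ) (hr : 1 ≤ r) (hn : r ≤ n)
    (s : Fin r → ℕ) (hs : ∀ i, 0 < s i) :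
    ((∃ m : ℤ, mhsStar n r s = (m : ℚ)) ↔ n = 1 ∧ r = 1) ∧
    (n = 1 ∧ r = 1 → mhsStar n r s = 1) := by
  have hone : n = 1 ∧ r = 1 → mhsStar n r s = 1 := by
    rintro ⟨rfl, rfl⟩
    exact mhsStar_one_one s
  refine ⟨⟨?_, fun h => ⟨1, by rw [hone h, Int.cast_one]⟩⟩, hone⟩
  rintro ⟨m, hm⟩
  have hval := padicValRat_two_mhsStar (by omega : 0 < n) hs
  rw [hm, padicValRat.of_int] at hval
  have hsum : 0 < ∑ i, s i := sum_pos (fun i _ => hs i) ⟨⟨0, hr⟩, mem_univ _⟩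
  have hlog : Nat.log 2 n = 0 := by
    -- `padicValInt` is `ℕ`-valued, so the left side of `hval` is nonnegative
    have : (∑ i, s i) * Nat.log 2 n = 0 := by omega
    simpa [hsum.ne'] using this
  have := Nat.log_eq_zero_iff.1 hlog
  omega
end

section
/- Let 1 ≤ r ≤ n be integers and (s₁, …, s_r) an r-tuple of positive integers. If there exists a prime p with n/(r+1) < p ≤ n/r and r < p, then H_n(s₁, …, s_r) is not an integer. -/
/-- The multiple harmonic sum
`H_n(s₁, …, s_r) = ∑_{1 ≤ k₁ < ⋯ < k_r ≤ n} 1/(k₁^{s₁} ⋯ k_r^{s_r})`. -/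
def mhs (n r : ℕ) (s : Fin r → ℕ) : ℚ :=
  ∑ k ∈ Finset.univ.filter (fun k : Fin r → Fin n => ∀ i j : Fin r, i < j → k i < k j),
    ∏ i, (1 : ℚ) / ((k i : ℕ) + 1 : ℚ) ^ s i

/-! Since `r p ≤ n < (r + 1) p ≤ p²`, the multiples of `p` in `{1, …, n}` are exactly
`p, 2p, …, rp`, each divisible by `p` only once. Hence the term `1 / (p^{s₁} ⋯ (rp)^{s_r})` of
`H_n` has `p`-adic norm `p^{s₁ + ⋯ + s_r}`, while every other term misses one of these multiples
and has a strictly smaller norm. By the ultrametric inequality `H_n` has norm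
`p^{s₁ + ⋯ + s_r} > 1`, so it is not an integer. -/

open Finset

namespace padicNorm

variable {p : ℕ} [Fact p.Prime]

theorem natCast_eq_ite_of_lt_sq {a : ℕ} (ha : a ≠ 0) (hap : a < p ^ 2) :
    padicNorm p a = if p ∣ a then (p : ℚ)⁻¹ else 1 := by
  split_ifs with hdvd
  · obtain ⟨b, rfl⟩ := hdvd
    have hb : ¬p ∣ b := by
      rintro ⟨c, rfl⟩
      have hc : c ≠ 0 := by rintro rfl; simp at ha
      have hle : p ^ 2 ≤ p * (p * c) := by
        rw [sq, ← mul_assoc]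
        exact Nat.le_mul_of_pos_right _ (Nat.pos_of_ne_zero hc)
      omega
    rw [Nat.cast_mul, padicNorm.mul, padicNorm_p_of_prime, (nat_eq_one_iff b).2 hb, mul_one]
  · exact (nat_eq_one_iff a).2 hdvd

protected theorem prod {ι : Type*} (s : Finset ι) (f : ι → ℚ) :
    padicNorm p (∏ i ∈ s, f i) = ∏ i ∈ s, padicNorm p (f i) :=
  map_prod (IsAbsoluteValue.abvHom (padicNorm p)) f s

theorem sum_eq_of_lt {ι : Type*} {s : Finset ι} {f : ι → ℚ} {i₀ : ι} (hi₀ : i₀ ∈ s)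
    (hlt : ∀ i ∈ s, i ≠ i₀ → padicNorm p (f i) < padicNorm p (f i₀)) :
    padicNorm p (∑ i ∈ s, f i) = padicNorm p (f i₀) := by
  classical
  rw [← add_sum_erase s f hi₀]
  rcases (s.erase i₀).eq_empty_or_nonempty with hs | hs
  · rw [hs, sum_empty, add_zero]
  have hrest : padicNorm p (∑ i ∈ s.erase i₀, f i) < padicNorm p (f i₀) :=
    sum_lt hs fun i hi => hlt i (mem_of_mem_erase hi) (ne_of_mem_erase hi)
  rw [add_eq_max_of_ne hrest.ne', max_eq_left hrest.le]

end padicNorm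

def increasingTuples (r n : ℕ) : Finset (Fin r → Fin n) :=
  univ.filter fun k => ∀ i j : Fin r, i < j → k i < k j

def mhsTerm {r n : ℕ} (s : Fin r → ℕ) (k : Fin r → Fin n) : ℚ :=
  ∏ i, (1 : ℚ) / ((k i : ℕ) + 1 : ℚ) ^ s i

theorem mhs_eq_sum_mhsTerm (n r : ℕ) (s : Fin r → ℕ) :
    mhs n r s = ∑ k ∈ increasingTuples r n, mhsTerm s k :=
  rfl

theorem mem_increasingTuples {r n : ℕ} {k : Fin r → Fin n} :
    k ∈ increasingTuples r n ↔ StrictMono k := by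
  simp [increasingTuples, StrictMono]

/-- Indices `a : Fin n` stand for the integers `a + 1 ∈ {1, …, n}`. -/
def shiftedMultiples (n p : ℕ) : Finset (Fin n) :=
  univ.filter fun a => p ∣ (a : ℕ) + 1

@[simp]
theorem mem_shiftedMultiples {n p : ℕ} {a : Fin n} :
    a ∈ shiftedMultiples n p ↔ p ∣ (a : ℕ) + 1 := by
  simp [shiftedMultiples]

theorem card_shiftedMultiples (n p : ℕ) : #(shiftedMultiples n p) = n / p := by
  rw [← Nat.card_multiples, ← Nat.Iio_eq_range, ← Fin.map_valEmbedding_univ, filter_map,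
    card_map]
  rfl

section

variable {p : ℕ} [Fact p.Prime]

theorem padicNorm_mhsTerm {r n : ℕ} (hn : n < p ^ 2) (s : Fin r → ℕ) (k : Fin r → Fin n) :
    padicNorm p (mhsTerm s k) =
      (p : ℚ) ^ ∑ i ∈ univ.filter (fun i => p ∣ (k i : ℕ) + 1), s i := by
  have hfactor : ∀ i, padicNorm p (1 / ((k i : ℕ) + 1 : ℚ) ^ s i) =
      if p ∣ (k i : ℕ) + 1 then (p : ℚ) ^ s i else 1 := by
    intro i
    have hlt : (k i : ℕ) + 1 < p ^ 2 := by omega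
    rw [padicNorm.div, padicNorm.one, IsAbsoluteValue.abv_pow (padicNorm p), ← Nat.cast_succ,
      padicNorm.natCast_eq_ite_of_lt_sq (Nat.succ_ne_zero _) hlt]
    split_ifs <;> simp
  rw [mhsTerm, padicNorm.prod, prod_congr rfl fun i _ => hfactor i, prod_ite, prod_const_one,
    mul_one, prod_pow_eq_pow_sum]

theorem padicNorm_mhs {n r : ℕ} {s : Fin r → ℕ} (hs : ∀ i, 0 < s i) (hn : n < p ^ 2)
    (hr : n / p = r) : padicNorm p (mhs n r s) = (p : ℚ) ^ ∑ i, s i := by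
  have hcard : #(shiftedMultiples n p) = r := (card_shiftedMultiples n p).trans hr
  set k₀ : Fin r → Fin n := ⇑((shiftedMultiples n p).orderEmbOfFin hcard)
  have hk₀_dvd : ∀ i, p ∣ (k₀ i : ℕ) + 1 := fun i =>
    mem_shiftedMultiples.1 (orderEmbOfFin_mem _ hcard i)
  have hk₀ : k₀ ∈ increasingTuples r n :=
    mem_increasingTuples.2 (orderEmbOfFin _ hcard).strictMono
  rw [mhs_eq_sum_mhsTerm, padicNorm.sum_eq_of_lt hk₀, padicNorm_mhsTerm hn,
    filter_true_of_mem fun i _ => hk₀_dvd i]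
  intro k hk hne
  obtain ⟨i₀, hi₀⟩ : ∃ i₀, ¬p ∣ (k i₀ : ℕ) + 1 := by
    by_contra! hdvd
    exact hne (orderEmbOfFin_unique hcard (fun i => mem_shiftedMultiples.2 (hdvd i))
      (mem_increasingTuples.1 hk))
  rw [padicNorm_mhsTerm hn, padicNorm_mhsTerm hn, filter_true_of_mem fun i _ => hk₀_dvd i]
  exact pow_lt_pow_right₀ (Nat.one_lt_cast.2 (Fact.out : p.Prime).one_lt)
    (sum_lt_sum_of_subset (filter_subset _ _) (mem_univ i₀) (by simpa using hi₀) (hs i₀)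
      fun _ _ _ => Nat.zero_le _)

end

theorem Nat.div_eq_of_div_succ_lt_of_le_div {K : Type*} [Field K] [LinearOrder K]
    [IsStrictOrderedRing K] {n r p : ℕ} (hr : 0 < r)
    (h1 : (n : K) / (r + 1) < p) (h2 : (p : K) ≤ n / r) : n / p = r := by
  rw [div_lt_iff₀ (by positivity)] at h1
  rw [le_div_iff₀ (by exact_mod_cast hr)] at h2
  refine Nat.div_eq_of_lt_le ?_ ?_
  · exact_mod_cast (by linarith : (r : K) * p ≤ n)
  · exact_mod_cast (by linarith : (n : K) < (r + 1) * p)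

theorem mhs_not_integer_of_prime_in_interval_general (n r : ℕ) (hr : 1 ≤ r)
    (s : Fin r → ℕ) (hs : ∀ i, 0 < s i)
    (p : ℕ) (hp : p.Prime)
    (h1 : (n : ℚ) / (r + 1) < (p : ℚ)) (h2 : (p : ℚ) ≤ (n : ℚ) / r)
    (hrp : r < p) :
    ¬∃ m : ℤ, mhs n r s = (m : ℚ) := by
  have := Fact.mk hp
  have hdiv : n / p = r := Nat.div_eq_of_div_succ_lt_of_le_div hr h1 h2
  have hsq : n < p ^ 2 := by rw [sq, ← Nat.div_lt_iff_lt_mul hp.pos]; omega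
  have hS : 0 < ∑ i, s i := sum_pos (fun i _ => hs i) ⟨⟨0, hr⟩, mem_univ _⟩
  rintro ⟨m, hm⟩
  have hint := padicNorm.of_int (p := p) m
  rw [← hm, padicNorm_mhs hs hsq hdiv] at hint
  exact (one_lt_pow₀ (Nat.one_lt_cast.2 hp.one_lt) hS.ne').not_ge hint

/-- If `1 ≤ r ≤ n` and there is a prime `p` with `n/(r+1) < p ≤ n/r` and `r < p`,
then `H_n(s₁,…,s_r)` is not an integer. -/
theorem mhs_not_integer_of_prime_in_interval (n r : ℕ) (hr : 1 ≤ r) (hn : r ≤ n)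
    (s : Fin r → ℕ) (hs : ∀ i, 0 < s i)
    (p : ℕ) (hp : p.Prime)
    (h1 : (n : ℚ) / (r + 1) < (p : ℚ)) (h2 : (p : ℚ) ≤ (n : ℚ) / r)
    (hrp : r < p) :
    ¬∃ m : ℤ, mhs n r s = (m : ℚ) :=
  mhs_not_integer_of_prime_in_interval_general n r hr s hs p hp h1 h2 hrp
end

section
/- Let (s₁, …, s_r) and (t₁, …, t_r) be r-tuples of positive integers with s₁ + ⋯ + s_r ≥ t₁ + ⋯ + t_r, and suppose there exists an index l with 0 ≤ l ≤ r−1 such that s_i ≤ t_i for all 1 ≤ i ≤ l and s_i ≥ t_i for all l+1 ≤ i ≤ r. Then for every positive integer n, H_n(s₁, …, s_r) ≤ H_n(t₁, …, t_r). -/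
section Crossing

variable {R : Type*} [CommSemiring R] [LinearOrder R] [IsStrictOrderedRing R]

theorem pow_mul_pow_le_pow_mul_pow_of_crossing {a c : R} {e f : ℕ} (ha : 0 ≤ a) (hc : 0 ≤ c)
    (h : a ≤ c ∧ e ≤ f ∨ c ≤ a ∧ f ≤ e) : a ^ f * c ^ e ≤ a ^ e * c ^ f := by
  rcases h with ⟨hac, hef⟩ | ⟨hca, hfe⟩
  · obtain ⟨d, rfl⟩ := Nat.exists_eq_add_of_le hef
    calc a ^ (e + d) * c ^ e = a ^ e * a ^ d * c ^ e := by rw [pow_add]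
      _ ≤ a ^ e * c ^ d * c ^ e := by gcongr
      _ = a ^ e * c ^ (e + d) := by ring
  · obtain ⟨d, rfl⟩ := Nat.exists_eq_add_of_le hfe
    calc a ^ f * c ^ (f + d) = a ^ f * c ^ d * c ^ f := by ring
      _ ≤ a ^ f * a ^ d * c ^ f := by gcongr
      _ = a ^ (f + d) * c ^ f := by rw [pow_add]

theorem Finset.prod_pow_le_prod_pow_of_crossing {ι : Type*} (s : Finset ι) {a : ι → R} {c : R}
    {e f : ι → ℕ} (ha : ∀ i ∈ s, 0 ≤ a i) (hc : 1 ≤ c)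
    (hcross : ∀ i ∈ s, a i ≤ c ∧ e i ≤ f i ∨ c ≤ a i ∧ f i ≤ e i)
    (hsum : ∑ i ∈ s, f i ≤ ∑ i ∈ s, e i) :
    ∏ i ∈ s, a i ^ f i ≤ ∏ i ∈ s, a i ^ e i := by
  have hc₀ : 0 ≤ c := zero_le_one.trans hc
  refine le_of_mul_le_mul_right ?_ (pow_pos (zero_lt_one.trans_le hc) (∑ i ∈ s, e i))
  calc (∏ i ∈ s, a i ^ f i) * c ^ ∑ i ∈ s, e i = ∏ i ∈ s, a i ^ f i * c ^ e i := by
        rw [prod_mul_distrib, prod_pow_eq_pow_sum]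
    _ ≤ ∏ i ∈ s, a i ^ e i * c ^ f i :=
        prod_le_prod (fun i hi => by have := ha i hi; positivity)
          fun i hi => pow_mul_pow_le_pow_mul_pow_of_crossing (ha i hi) hc₀ (hcross i hi)
    _ = (∏ i ∈ s, a i ^ e i) * c ^ ∑ i ∈ s, f i := by
        rw [prod_mul_distrib, prod_pow_eq_pow_sum]
    _ ≤ (∏ i ∈ s, a i ^ e i) * c ^ ∑ i ∈ s, e i := by
        gcongr
        exact prod_nonneg fun i hi => pow_nonneg (ha i hi) _

end Crossing

theorem mhs_le_mhs_general (r : ℕ) (s t : Fin r → ℕ)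
    (hw : ∑ i, t i ≤ ∑ i, s i)
    (l : ℕ) (hl : l < r)
    (h1 : ∀ i : Fin r, (i : ℕ) < l → s i ≤ t i)
    (h2 : ∀ i : Fin r, l ≤ (i : ℕ) → t i ≤ s i)
    (n : ℕ) :
    mhs n r s ≤ mhs n r t := by
  refine Finset.sum_le_sum fun k hk => ?_
  have hk : StrictMono k := (Finset.mem_filter.1 hk).2
  set a : Fin r → ℚ := fun i => ((k i : ℕ) : ℚ) + 1
  have ha_mono : Monotone a := fun i j hij => by
    simpa [a] using Fin.val_le_of_le (hk.monotone hij)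
  have ha_pos : ∀ i, 0 < a i := fun i => by positivity
  let p : Fin r := ⟨l, hl⟩
  simp only [one_div, Finset.prod_inv_distrib]
  refine inv_anti₀ (Finset.prod_pos fun i _ => pow_pos (ha_pos i) _) ?_
  refine Finset.prod_pow_le_prod_pow_of_crossing _ (c := a p) (fun i _ => (ha_pos i).le)
    (by simp [a]) (fun i _ => ?_) hw
  by_cases hi : (i : ℕ) < l
  · exact .inl ⟨ha_mono (Fin.le_iff_val_le_val.2 hi.le), h1 i hi⟩
  · exact .inr ⟨ha_mono (Fin.le_iff_val_le_val.2 (not_lt.1 hi)), h2 i (not_lt.1 hi)⟩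

/-- If `s` and `t` are `r`-tuples of positive integers with `|s| ≥ |t|` and there is an
index `l` with `0 ≤ l ≤ r−1` such that `s_i ≤ t_i` for `i ≤ l` and `s_i ≥ t_i` for
`i > l`, then `H_n(s) ≤ H_n(t)` for every positive integer `n`. -/
theorem mhs_le_mhs (r : ℕ) (hr : 1 ≤ r) (s t : Fin r → ℕ)
    (hs : ∀ i, 0 < s i) (ht : ∀ i, 0 < t i)
    (hw : ∑ i, t i ≤ ∑ i, s i)
    (l : ℕ) (hl : l < r)
    (h1 : ∀ i : Fin r, (i : ℕ) < l → s i ≤ t i)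
    (h2 : ∀ i : Fin r, l ≤ (i : ℕ) → t i ≤ s i)
    (n : ℕ) (hn : 1 ≤ n) :
    mhs n r s ≤ mhs n r t :=
  mhs_le_mhs_general r s t hw l hl h1 h2 n
end

section
/- Let 2 ≤ r < n be integers, let (s₂, …, s_r) be positive integers, and for 1 ≤ k ≤ n−r+1 set c_k = Σ_{k < k₂ < ⋯ < k_r ≤ n} 1/(k₂^{s₂} ⋯ k_r^{s_r}). If p is a prime with n/2 < p ≤ n−r+1, then ν_p(c_k) ≥ −max_{2≤i≤r} s_i for 1 ≤ k < p, and ν_p(c_k) ≥ 0 for p ≤ k ≤ n−r+1; consequently min_{1≤k≤n−r+1, k≠p} ν_p(c_k) ≥ −max_{2≤i≤r} s_i. -/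
/-! Since `n < 2p`, the only integer in `[1, n]` divisible by `p` is `p` itself, and it is divisible
exactly once. A term `∏ 1/k_i^{s_i}` of `c_k` has distinct `k_i`, so its valuation is `-s_i` if some
`k_i = p` and `0` otherwise; when `k ≥ p` every `k_i > p`, so it is `0`. The ultrametric inequality
passes these bounds from the terms to the sum `c_k`. -/

/-- `c_k = ∑_{k < k₂ < ⋯ < k_r ≤ n} 1/(k₂^{s₂} ⋯ k_r^{s_r})`, the inner sum of the
multiple harmonic sum, where the tail `(k₂,…,k_r)` has `r` entries with exponents `s'`. -/
def cval (n r : ℕ) (s' : Fin r → ℕ) (k : ℕ) : ℚ :=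
  ∑ kk ∈ Finset.univ.filter (fun kk : Fin r → Fin n =>
      (∀ i j : Fin r, i < j → kk i < kk j) ∧ ∀ i, k ≤ (kk i : ℕ)),
    ∏ i, (1 : ℚ) / ((kk i : ℕ) + 1 : ℚ) ^ s' i

open Finset

namespace padicValRat

variable {p : ℕ} [Fact p.Prime] {α : Type*}

theorem prod {s : Finset α} {F : α → ℚ} (hF : ∀ i ∈ s, F i ≠ 0) :
    padicValRat p (∏ i ∈ s, F i) = ∑ i ∈ s, padicValRat p (F i) := by
  classical
  induction s using Finset.induction_on with
  | empty => simp
  | insert a s ha ih =>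
    rw [prod_insert ha, sum_insert ha,
      padicValRat.mul (hF a (mem_insert_self a s))
        (prod_ne_zero_iff.2 fun i hi => hF i (mem_insert_of_mem hi)),
      ih fun i hi => hF i (mem_insert_of_mem hi)]

/-- The bound `m ≤ 0` covers the sums that vanish, whose valuation is `0` by convention. -/
theorem le_sum {m : ℤ} (hm : m ≤ 0) {s : Finset α} {F : α → ℚ}
    (hF : ∀ i ∈ s, m ≤ padicValRat p (F i)) : m ≤ padicValRat p (∑ i ∈ s, F i) := by
  classical
  induction s using Finset.induction_on with
  | empty => simpa using hm
  | insert a s ha ih =>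
    rw [sum_insert ha]
    by_cases h0 : F a + ∑ i ∈ s, F i = 0
    · simpa [h0] using hm
    · exact (le_min (hF a (mem_insert_self a s))
        (ih fun i hi => hF i (mem_insert_of_mem hi))).trans (min_le_padicValRat_add h0)

theorem prod_one_div_pow {s : Finset α} {x e : α → ℕ} (hx : ∀ i ∈ s, x i ≠ 0) :
    padicValRat p (∏ i ∈ s, 1 / (x i : ℚ) ^ e i) =
      -((∑ i ∈ s, e i * padicValNat p (x i) : ℕ) : ℤ) := by
  rw [prod fun i hi => by simp [hx i hi]]
  push_cast
  rw [← sum_neg_distrib]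
  refine sum_congr rfl fun i _ => ?_
  rw [one_div, padicValRat.inv, padicValRat.pow, padicValRat.of_nat]

end padicValRat

theorem padicValNat_eq_zero_of_lt_two_mul {p v : ℕ} (hv : v < 2 * p) (hvp : v ≠ p) :
    padicValNat p v = 0 := by
  rcases eq_or_ne v 0 with rfl | hv0
  · exact padicValNat_zero_right p
  refine padicValNat.eq_zero_of_not_dvd ?_
  rintro ⟨m, rfl⟩
  have : m < 2 := by nlinarith
  interval_cases m <;> simp_all

section

variable {α : Type*} {p : ℕ} {s : Finset α} {x : α → ℕ}

theorem sum_mul_padicValNat_le_sup [Fact p.Prime] (hx : Set.InjOn x s)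
    (hx2p : ∀ i ∈ s, x i < 2 * p) (e : α → ℕ) :
    ∑ i ∈ s, e i * padicValNat p (x i) ≤ s.sup e := by
  classical
  have hsum : ∑ i ∈ s, e i * padicValNat p (x i) = ∑ i ∈ s with x i = p, e i := by
    rw [sum_filter]
    refine sum_congr rfl fun i hi => ?_
    split_ifs with h
    · rw [h, padicValNat_self, mul_one]
    · rw [padicValNat_eq_zero_of_lt_two_mul (hx2p i hi) h, mul_zero]
  have hcard : #{i ∈ s | x i = p} ≤ 1 :=
    card_le_one.2 fun i hi j hj =>
      hx (mem_filter.1 hi).1 (mem_filter.1 hj).1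
        ((mem_filter.1 hi).2.trans (mem_filter.1 hj).2.symm)
  calc ∑ i ∈ s, e i * padicValNat p (x i)
      = ∑ i ∈ s with x i = p, e i := hsum
    _ ≤ #{i ∈ s | x i = p} • s.sup e :=
        sum_le_card_nsmul _ _ _ fun i hi => le_sup (mem_filter.1 hi).1
    _ ≤ s.sup e := by simpa using Nat.mul_le_mul_right _ hcard

theorem sum_mul_padicValNat_eq_zero (hpx : ∀ i ∈ s, p < x i) (hx2p : ∀ i ∈ s, x i < 2 * p)
    (e : α → ℕ) : ∑ i ∈ s, e i * padicValNat p (x i) = 0 :=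
  sum_eq_zero fun i hi => by
    rw [padicValNat_eq_zero_of_lt_two_mul (hx2p i hi) (hpx i hi).ne', mul_zero]

end

theorem le_padicValRat_cval {n r p k : ℕ} [Fact p.Prime] (s' : Fin r → ℕ) {m : ℤ} (hm : m ≤ 0)
    (h : ∀ kk : Fin r → Fin n, StrictMono kk → (∀ i, k ≤ (kk i : ℕ)) →
      m ≤ -((∑ i, s' i * padicValNat p ((kk i : ℕ) + 1) : ℕ) : ℤ)) :
    m ≤ padicValRat p (cval n r s' k) := by
  refine padicValRat.le_sum hm fun kk hkk => ?_
  obtain ⟨hmono, hk⟩ := (mem_filter.1 hkk).2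
  have := padicValRat.prod_one_div_pow (p := p) (s := univ) (x := fun i => (kk i : ℕ) + 1)
    (e := s') fun i _ => Nat.succ_ne_zero _
  simp only [Nat.cast_add, Nat.cast_one] at this
  exact this ▸ h kk hmono hk

theorem padicValRat_cval_bounds_general (r n p : ℕ) (s' : Fin r → ℕ)
    (hp : p.Prime) (hp1 : (n : ℚ) / 2 < (p : ℚ)) :
    (∀ k : ℕ, 1 ≤ k → k < p →
        -((Finset.univ.sup s' : ℕ) : ℤ) ≤ padicValRat p (cval n r s' k)) ∧
    (∀ k : ℕ, p ≤ k → k ≤ n - r → 0 ≤ padicValRat p (cval n r s' k)) ∧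
    (∀ k : ℕ, 1 ≤ k → k ≤ n - r → k ≠ p →
        -((Finset.univ.sup s' : ℕ) : ℤ) ≤ padicValRat p (cval n r s' k)) := by
  have := Fact.mk hp
  have hn : n < 2 * p := by exact_mod_cast (by linarith : (n : ℚ) < 2 * p)
  have hlt (kk : Fin r → Fin n) (i : Fin r) : (kk i : ℕ) + 1 < 2 * p := by omega
  have hbound (k : ℕ) : -((univ.sup s' : ℕ) : ℤ) ≤ padicValRat p (cval n r s' k) :=
    le_padicValRat_cval s' (by simp) fun kk hkk _ => by
      have := sum_mul_padicValNat_le_sup (p := p) (s := univ) (x := fun i => (kk i : ℕ) + 1)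
        (fun i _ j _ hij => hkk.injective (Fin.ext (Nat.succ_injective hij)))
        (fun i _ => hlt kk i) s'
      omega
  refine ⟨fun k _ _ => hbound k, fun k hpk _ => ?_, fun k _ _ _ => hbound k⟩
  refine le_padicValRat_cval s' le_rfl fun kk _ hk => ?_
  rw [sum_mul_padicValNat_eq_zero (fun i _ => by have := hk i; omega) (fun i _ => hlt kk i)]
  simp

/-- Let the full length be `r + 1` with `2 ≤ r + 1 < n`. If `p` is a prime with
`n/2 < p ≤ n − (r+1) + 1 = n − r`, then `ν_p(c_k) ≥ −max_i s_i` for `1 ≤ k < p` and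
`ν_p(c_k) ≥ 0` for `p ≤ k ≤ n − r`; consequently
`min_{1 ≤ k ≤ n−r, k ≠ p} ν_p(c_k) ≥ −max_i s_i`. -/
theorem padicValRat_cval_bounds (r n p : ℕ) (hr : 1 ≤ r) (hn : r + 2 ≤ n)
    (s' : Fin r → ℕ) (hs' : ∀ i, 0 < s' i)
    (hp : p.Prime) (hp1 : (n : ℚ) / 2 < (p : ℚ)) (hp2 : p ≤ n - r) :
    (∀ k : ℕ, 1 ≤ k → k < p →
        -((Finset.univ.sup s' : ℕ) : ℤ) ≤ padicValRat p (cval n r s' k)) ∧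
    (∀ k : ℕ, p ≤ k → k ≤ n - r → 0 ≤ padicValRat p (cval n r s' k)) ∧
    (∀ k : ℕ, 1 ≤ k → k ≤ n - r → k ≠ p →
        -((Finset.univ.sup s' : ℕ) : ℤ) ≤ padicValRat p (cval n r s' k)) :=
  padicValRat_cval_bounds_general r n p s' hp hp1
end

section
/- Let 1 ≤ r ≤ n be integers and (s₁, …, s_r) an r-tuple of positive integers. If e·(ln(n) + 1) ≤ r, then H_n(s₁, …, s_r) < 1; in particular H_n(s₁, …, s_r) is not an integer. -/
open Finset

/-- `r! · ∑_{k₁<⋯<k_r} ∏ a(kᵢ) ≤ (∑ a)^r` for nonneg `a`. -/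
lemma key_ineq (n r : ℕ) (a : Fin n → ℝ) (ha : ∀ k, 0 ≤ a k) :
    (r.factorial : ℝ) *
      ∑ k ∈ Finset.univ.filter (fun k : Fin r → Fin n => ∀ i j : Fin r, i < j → k i < k j),
        ∏ i, a (k i) ≤ (∑ k, a k) ^ r := by
  classical
  haveI : WellFoundedLT (Fin r) := inferInstance
  set T := Finset.univ.filter (fun k : Fin r → Fin n => ∀ i j : Fin r, i < j → k i < k j) with hT
  have hmono : ∀ k ∈ T, StrictMono k := by
    intro k hk
    simp only [hT, mem_filter] at hk
    exact fun i j hij => hk.2 i j hij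
  -- the injection (σ, k) ↦ k ∘ σ
  set φ : Equiv.Perm (Fin r) × (Fin r → Fin n) → (Fin r → Fin n) := fun p => p.2 ∘ p.1 with hφ
  have hinj : Set.InjOn φ ↑((Finset.univ : Finset (Equiv.Perm (Fin r))) ×ˢ T) := by
    intro p hp q hq hpq
    simp only [coe_product, Set.mem_prod, mem_coe] at hp hq
    have hk : p.2 = q.2 := by
      have hreq : Set.range p.2 = Set.range q.2 := by
        rw [← p.1.surjective.range_comp p.2, ← q.1.surjective.range_comp q.2]
        exact congrArg Set.range hpq
      exact ((hmono p.2 hp.2).range_inj (hmono q.2 hq.2)).mp hreq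
    have hσ : p.1 = q.1 := by
      ext x
      have : p.2 (p.1 x) = q.2 (q.1 x) := congrFun hpq x
      rw [← hk] at this
      exact congrArg Fin.val ((hmono _ hp.2).injective this)
    exact Prod.ext hσ hk
  have hsum : ∑ p ∈ Finset.univ ×ˢ T, ∏ i, a (φ p i) = (r.factorial : ℝ) * ∑ k ∈ T, ∏ i, a (k i) := by
    rw [Finset.sum_product]
    have : ∀ σ : Equiv.Perm (Fin r), ∀ k ∈ T, ∏ i, a (k (σ i)) = ∏ i, a (k i) := by
      intro σ k _
      exact Equiv.prod_comp σ (fun i => a (k i))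
    calc ∑ σ : Equiv.Perm (Fin r), ∑ k ∈ T, ∏ i, a (φ (σ, k) i)
        = ∑ σ : Equiv.Perm (Fin r), ∑ k ∈ T, ∏ i, a (k i) := by
          refine Finset.sum_congr rfl fun σ _ => Finset.sum_congr rfl fun k hk => this σ k hk
      _ = (r.factorial : ℝ) * ∑ k ∈ T, ∏ i, a (k i) := by
          rw [Finset.sum_const, nsmul_eq_mul, Finset.card_univ, Fintype.card_perm,
            Fintype.card_fin]
  rw [← hsum]
  have himg : ∑ f ∈ (Finset.univ ×ˢ T).image φ, ∏ i, a (f i)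
      = ∑ p ∈ Finset.univ ×ˢ T, ∏ i, a (φ p i) :=
    Finset.sum_image (fun p hp q hq => hinj (by exact_mod_cast hp) (by exact_mod_cast hq))
  rw [← himg]
  have hsub : (Finset.univ ×ˢ T).image φ ⊆ Finset.univ := Finset.subset_univ _
  calc ∑ f ∈ (Finset.univ ×ˢ T).image φ, ∏ i, a (f i)
      ≤ ∑ f : Fin r → Fin n, ∏ i, a (f i) :=
        Finset.sum_le_sum_of_subset_of_nonneg hsub
          (fun f _ _ => Finset.prod_nonneg fun i _ => ha (f i))
    _ = (∑ k, a k) ^ r := by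
        rw [Finset.sum_pow' Finset.univ a r, Fintype.piFinset_univ]

/-- `r^r < r! · e^r` for `r ≥ 1`. -/
lemma pow_self_lt_factorial_mul_exp : ∀ r : ℕ, 1 ≤ r → ((r : ℝ)) ^ r < (r.factorial : ℝ) * Real.exp r := by
  intro r hr
  induction r with
  | zero => omega
  | succ m ih =>
    rcases Nat.eq_or_lt_of_le hr with h1 | h1
    · have : m = 0 := by omega
      subst this
      have hee := Real.add_one_le_exp (1:ℝ)
      simp only [Nat.factorial]
      push_cast
      nlinarith [hee]
    · have hm : 1 ≤ m := by omega
      have ihm := ih hm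
      have hmpos : (0:ℝ) < m := by exact_mod_cast hm
      -- (m+1)^m ≤ e * m^m
      have h2 : ((m:ℝ) + 1) ^ m ≤ Real.exp 1 * (m:ℝ) ^ m := by
        have hstep : (m:ℝ) + 1 ≤ m * Real.exp (1 / m) := by
          have := Real.add_one_le_exp (1 / (m:ℝ))
          have h' : (m:ℝ) * (1 / m + 1) ≤ m * Real.exp (1 / m) :=
            mul_le_mul_of_nonneg_left this hmpos.le
          calc (m:ℝ) + 1 = m * (1 / m + 1) := by field_simp; ring
            _ ≤ m * Real.exp (1 / m) := h'
        calc ((m:ℝ) + 1) ^ m ≤ ((m:ℝ) * Real.exp (1 / m)) ^ m :=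
              pow_le_pow_left₀ (by positivity) hstep m
          _ = (m:ℝ) ^ m * Real.exp (1 / m) ^ m := mul_pow _ _ _
          _ = (m:ℝ) ^ m * Real.exp 1 := by
              rw [← Real.exp_nat_mul]
              congr 1
              field_simp
          _ = Real.exp 1 * (m:ℝ) ^ m := mul_comm _ _
      have hexp : Real.exp ((m:ℝ) + 1) = Real.exp m * Real.exp 1 := by
        rw [← Real.exp_add]
      have hfac : ((m+1).factorial : ℝ) = ((m:ℝ) + 1) * m.factorial := by
        push_cast [Nat.factorial_succ]; ring
      push_cast
      rw [hfac, hexp]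
      calc ((m:ℝ) + 1) ^ (m + 1) = ((m:ℝ) + 1) * ((m:ℝ) + 1) ^ m := by ring
        _ ≤ ((m:ℝ) + 1) * (Real.exp 1 * (m:ℝ) ^ m) :=
            mul_le_mul_of_nonneg_left h2 (by positivity)
        _ < ((m:ℝ) + 1) * (Real.exp 1 * ((m.factorial : ℝ) * Real.exp m)) := by
            have hpos : (0:ℝ) < (m:ℝ) + 1 := by positivity
            have he : (0:ℝ) < Real.exp 1 := Real.exp_pos 1
            exact mul_lt_mul_of_pos_left (mul_lt_mul_of_pos_left ihm he) hpos
        _ = ((m:ℝ) + 1) * (m.factorial : ℝ) * (Real.exp m * Real.exp 1) := by ring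

/-- If `1 ≤ r ≤ n` and `e·(ln n + 1) ≤ r`, then `H_n(s₁,…,s_r) < 1`; in particular it
is not an integer. -/
theorem mhs_lt_one_of_large_length (n r : ℕ) (hr : 1 ≤ r) (hn : r ≤ n)
    (s : Fin r → ℕ) (hs : ∀ i, 0 < s i)
    (h : Real.exp 1 * (Real.log n + 1) ≤ (r : ℝ)) :
    mhs n r s < 1 ∧ ¬∃ m : ℤ, mhs n r s = (m : ℚ) := by
  have hn1 : (1:ℝ) ≤ (n:ℝ) := by exact_mod_cast hr.trans hn
  set T := Finset.univ.filter (fun k : Fin r → Fin n => ∀ i j : Fin r, i < j → k i < k j) with hT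
  set a : Fin n → ℝ := fun k => 1 / ((k : ℕ) + 1) with ha
  have ha0 : ∀ k, 0 ≤ a k := fun k => by positivity
  -- cast mhs to ℝ
  have hcast : ((mhs n r s : ℚ) : ℝ)
      = ∑ k ∈ T, ∏ i, (1:ℝ) / (((k i : ℕ) : ℝ) + 1) ^ s i := by
    rw [mhs]
    push_cast
    rfl
  -- step: drop exponents
  have hstep1 : ((mhs n r s : ℚ) : ℝ) ≤ ∑ k ∈ T, ∏ i, a (k i) := by
    rw [hcast]
    refine Finset.sum_le_sum fun k _ => Finset.prod_le_prod
      (fun i _ => by positivity) (fun i _ => ?_)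
    rw [ha]
    have h1 : (0:ℝ) < ((k i : ℕ) : ℝ) + 1 := by positivity
    refine one_div_le_one_div_of_le h1 ?_
    exact le_self_pow₀ (by linarith) (hs i).ne'
  have hkey := key_ineq n r a ha0
  -- harmonic bound
  have hharm : ∑ k, a k ≤ 1 + Real.log n := by
    have : ∑ k, a k = ((harmonic n : ℚ) : ℝ) := by
      rw [harmonic]
      push_cast
      rw [Fin.sum_univ_eq_sum_range (fun k => (1:ℝ) / ((k:ℝ) + 1))]
      exact Finset.sum_congr rfl fun i _ => (one_div _)
    rw [this]
    exact harmonic_le_one_add_log n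
  have hsum0 : (0:ℝ) ≤ ∑ k, a k := Finset.sum_nonneg fun k _ => ha0 k
  have hlog0 : (0:ℝ) ≤ 1 + Real.log n := by
    have := Real.log_nonneg hn1; linarith
  have hdiv : 1 + Real.log n ≤ (r:ℝ) / Real.exp 1 := by
    rw [le_div_iff₀ (Real.exp_pos 1)]
    linarith
  have hfin : ((r:ℝ) / Real.exp 1) ^ r < (r.factorial : ℝ) := by
    rw [div_pow, div_lt_iff₀ (by positivity)]
    have := pow_self_lt_factorial_mul_exp r hr
    have hexp : Real.exp (r:ℝ) = Real.exp 1 ^ r := by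
      rw [← Real.exp_nat_mul, mul_one]
    rw [hexp] at this
    exact this
  have hchain : (∑ k, a k) ^ r < (r.factorial : ℝ) :=
    lt_of_le_of_lt (by
      calc (∑ k, a k) ^ r ≤ (1 + Real.log n) ^ r := pow_le_pow_left₀ hsum0 hharm r
        _ ≤ ((r:ℝ) / Real.exp 1) ^ r := pow_le_pow_left₀ hlog0 hdiv r) hfin
  have hfacpos : (0:ℝ) < (r.factorial : ℝ) := by positivity
  have hmhs_lt : ((mhs n r s : ℚ) : ℝ) < 1 := by
    have h1 : (r.factorial : ℝ) * ((mhs n r s : ℚ) : ℝ) < (r.factorial : ℝ) := by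
      calc (r.factorial : ℝ) * ((mhs n r s : ℚ) : ℝ)
          ≤ (r.factorial : ℝ) * ∑ k ∈ T, ∏ i, a (k i) :=
            mul_le_mul_of_nonneg_left hstep1 hfacpos.le
        _ ≤ (∑ k, a k) ^ r := hkey
        _ < (r.factorial : ℝ) := hchain
    nlinarith
  have hlt : mhs n r s < 1 := by exact_mod_cast hmhs_lt
  have hpos : 0 < mhs n r s := by
    rw [mhs]
    refine Finset.sum_pos (fun k _ => Finset.prod_pos fun i _ => by positivity) ?_
    refine ⟨fun i => ⟨i.1, lt_of_lt_of_le i.2 hn⟩, ?_⟩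
    simp only [Finset.mem_filter, Finset.mem_univ, true_and]
    intro i j hij
    exact hij
  refine ⟨hlt, ?_⟩
  rintro ⟨m, hm⟩
  rw [hm] at hlt hpos
  have h1 : 0 < m := by exact_mod_cast hpos
  have h2 : m < 1 := by exact_mod_cast hlt
  omega
end
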